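/- Any two points in a closed sector of the annulus A_r of angular width θ = arccos(1 - 1/(2(1/2+r)²)) are at Euclidean distance at most 1, with equality only for the endpoints of a unit chord of the outer circle. -/

import Mathlib

/-!
Write `R = 1/2 + r` and `c = cos θ = 1 - 1/(2R²)`, so that `2R²(1 - c) = 1`. By the law of cosines
`‖p - q‖² = s₁² + s₂² - 2 s₁ s₂ cos (φ₁ - φ₂)`, and `|φ₁ - φ₂| ≤ θ` gives `cos (φ₁ - φ₂) ≥ c`,
so `‖p - q‖² ≤ Q(s₁, s₂) := s₁² + s₂² - 2c s₁ s₂`. On the square `[1 - R, R]²` the form `Q` attains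
its maximum `Q(R, R) = 1` only at `(R, R)`, because
`Q(R, R) - Q(s₁, s₂) = (R - s₁)(s₁ + R - 2c s₂) + (R - s₂)(s₂ + R - 2cR)`
with both summands nonnegative and the second factor of the last one positive.
-/

open Real Set

theorem Complex.norm_ofReal_mul_exp_sub_sq (s₁ s₂ φ₁ φ₂ : ℝ) :
    ‖(s₁ : ℂ) * exp (φ₁ * I) - (s₂ : ℂ) * exp (φ₂ * I)‖ ^ 2
      = s₁ ^ 2 + s₂ ^ 2 - 2 * s₁ * s₂ * Real.cos (φ₁ - φ₂) := by
  rw [Complex.sq_norm, Complex.normSq_apply]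
  simp only [exp_mul_I, ← ofReal_cos, ← ofReal_sin, sub_re, sub_im, mul_re, mul_im, add_re,
    add_im, ofReal_re, ofReal_im, I_re, I_im, Real.cos_sub]
  linear_combination s₁ ^ 2 * Real.sin_sq_add_cos_sq φ₁ + s₂ ^ 2 * Real.sin_sq_add_cos_sq φ₂

theorem Real.cos_le_cos_of_abs_le {x θ : ℝ} (hx : |x| ≤ θ) (hθ : θ ≤ π) : cos θ ≤ cos x :=
  cos_abs x ▸ cos_le_cos_of_nonneg_of_le_pi (abs_nonneg x) hθ hx

theorem Real.abs_eq_of_cos_eq_cos {x θ : ℝ} (hx : |x| ≤ θ) (hθ : θ ≤ π) (h : cos x = cos θ) :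
    |x| = θ :=
  injOn_cos ⟨abs_nonneg x, hx.trans hθ⟩ ⟨(abs_nonneg x).trans hx, hθ⟩ (by rwa [cos_abs])

/-- The hypothesis `hc` says that `x² + y² - 2cxy` is larger at `(R, R)` than at `(R, ρ)`. -/
theorem sq_add_sq_sub_mul_le {c ρ R s₁ s₂ : ℝ} (hρ : 0 ≤ ρ) (hc : 2 * c * R < ρ + R)
    (h₁ : s₁ ∈ Icc ρ R) (h₂ : s₂ ∈ Icc ρ R) :
    s₁ ^ 2 + s₂ ^ 2 - 2 * c * s₁ * s₂ ≤ 2 * R ^ 2 - 2 * c * R ^ 2 ∧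
      (s₁ ^ 2 + s₂ ^ 2 - 2 * c * s₁ * s₂ = 2 * R ^ 2 - 2 * c * R ^ 2 → s₁ = R ∧ s₂ = R) := by
  obtain ⟨hρ₁, hR₁⟩ := h₁
  obtain ⟨hρ₂, hR₂⟩ := h₂
  have hdecomp : 2 * R ^ 2 - 2 * c * R ^ 2 - (s₁ ^ 2 + s₂ ^ 2 - 2 * c * s₁ * s₂)
      = (R - s₁) * (s₁ + R - 2 * c * s₂) + (R - s₂) * (s₂ + R - 2 * c * R) := by ring
  have hpos : ∀ s ∈ Icc ρ R, 0 < s + R - 2 * c * R := fun s hs => by linarith [hs.1]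
  have hnonneg : 0 ≤ s₁ + R - 2 * c * s₂ := by
    rcases le_total 0 c with hc₀ | hc₀
    · nlinarith [mul_le_mul_of_nonneg_left hR₂ hc₀]
    · nlinarith [mul_nonpos_of_nonpos_of_nonneg hc₀ (hρ.trans hρ₂)]
  have hterm₁ : 0 ≤ (R - s₁) * (s₁ + R - 2 * c * s₂) := mul_nonneg (by linarith) hnonneg
  have hfactor₂ : 0 < s₂ + R - 2 * c * R := hpos s₂ ⟨hρ₂, hR₂⟩
  have hterm₂ : 0 ≤ (R - s₂) * (s₂ + R - 2 * c * R) := mul_nonneg (by linarith) hfactor₂.le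
  refine ⟨by linarith, fun heq => ?_⟩
  have hs₂ : s₂ = R := by
    nlinarith [mul_le_mul_of_nonneg_right hR₂ hfactor₂.le]
  subst hs₂
  have := hpos s₁ ⟨hρ₁, hR₁⟩
  exact ⟨by nlinarith [mul_le_mul_of_nonneg_right hR₁ this.le], rfl⟩

theorem chord_cos_bounds {R c : ℝ} (h₁ : 1 / 2 < R) (h₂ : R < 1) (hc : c = 1 - 1 / (2 * R ^ 2)) :
    -1 ≤ c ∧ c ≤ 1 ∧ 2 * R ^ 2 - 2 * c * R ^ 2 = 1 ∧ 2 * c * R < 1 := by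
  have hR : 0 < R := by linarith
  subst hc
  refine ⟨?_, ?_, ?_, ?_⟩
  · rw [le_sub_comm, div_le_iff₀ (by positivity)]; nlinarith
  · linarith [show 0 < 1 / (2 * R ^ 2) by positivity]
  · field_simp; ring
  · rw [← sub_pos]; field_simp; nlinarith

theorem unit_sector_diameter (r : ℝ) (hr0 : 0 < r) (hr1 : r < 1 / 2)
    (α s₁ s₂ φ₁ φ₂ : ℝ)
    (hs₁ : s₁ ∈ Set.Icc (1 / 2 - r) (1 / 2 + r)) (hs₂ : s₂ ∈ Set.Icc (1 / 2 - r) (1 / 2 + r))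
    (hφ₁ : φ₁ ∈ Set.Icc α (α + Real.arccos (1 - 1 / (2 * (1 / 2 + r) ^ 2))))
    (hφ₂ : φ₂ ∈ Set.Icc α (α + Real.arccos (1 - 1 / (2 * (1 / 2 + r) ^ 2))))
    (p q : ℂ)
    (hp : p = (s₁ : ℂ) * Complex.exp (φ₁ * Complex.I))
    (hq : q = (s₂ : ℂ) * Complex.exp (φ₂ * Complex.I)) :
    ‖p - q‖ ≤ 1 ∧
      (‖p - q‖ = 1 →
        s₁ = 1 / 2 + r ∧ s₂ = 1 / 2 + r ∧
          |φ₁ - φ₂| = Real.arccos (1 - 1 / (2 * (1 / 2 + r) ^ 2))) := by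
  set R := 1 / 2 + r with hR
  set c := 1 - 1 / (2 * R ^ 2) with hc
  obtain ⟨hc₁, hc₂, hchord, hcR⟩ := chord_cos_bounds (by linarith) (by linarith) hc
  have hΔ : |φ₁ - φ₂| ≤ arccos c :=
    abs_sub_le_iff.2 ⟨by linarith [hφ₁.2, hφ₂.1], by linarith [hφ₁.1, hφ₂.2]⟩
  have hcos : c ≤ cos (φ₁ - φ₂) := cos_arccos hc₁ hc₂ ▸ cos_le_cos_of_abs_le hΔ (arccos_le_pi c)
  have hs : 0 < s₁ * s₂ := mul_pos (by linarith [hs₁.1]) (by linarith [hs₂.1])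
  have hnorm : ‖p - q‖ ^ 2 = s₁ ^ 2 + s₂ ^ 2 - 2 * s₁ * s₂ * cos (φ₁ - φ₂) := by
    rw [hp, hq, Complex.norm_ofReal_mul_exp_sub_sq]
  obtain ⟨hquad, hquad_eq⟩ := sq_add_sq_sub_mul_le (c := c) (by linarith : (0 : ℝ) ≤ 1 / 2 - r)
    (by linarith) hs₁ hs₂
  have hangle := mul_le_mul_of_nonneg_left hcos hs.le
  refine ⟨(sq_le_one_iff₀ (norm_nonneg _)).1 (by linarith), fun h => ?_⟩
  have hsq : ‖p - q‖ ^ 2 = 1 := by rw [h, one_pow]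
  obtain ⟨rfl, rfl⟩ := hquad_eq (by linarith)
  refine ⟨rfl, rfl, abs_eq_of_cos_eq_cos hΔ (arccos_le_pi c) ?_⟩
  rw [cos_arccos hc₁ hc₂]
  exact mul_left_cancel₀ hs.ne' (by linarith)
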